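/- For k < 0 and x, y in the open ball ‖x‖₂², ‖y‖₂² < −1/k, the Möbius sum x ⊕ y also lies in the open ball: ‖x ⊕ y‖₂² < −1/k. -/

import Mathlib

/-!
The key identity is
`1 + k‖x ⊕ y‖² = (1 + k‖x‖²)(1 + k‖y‖²) / (1 - 2k⟨x,y⟩ + k²‖x‖²‖y‖²)`.
For `k < 0`, a point `z` lies in the ball `‖z‖² < -1/k` exactly when `1 + k‖z‖² > 0`, so both
factors of the numerator are positive; by Cauchy–Schwarz the denominator is at least
`(1 - |k|‖x‖‖y‖)²`, which is positive as well.
-/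

open scoped InnerProductSpace

/-- Möbius addition in the Poincaré ball of curvature `k`. -/
noncomputable def mobiusAdd {d : ℕ} (k : ℝ) (x y : EuclideanSpace ℝ (Fin d)) :
    EuclideanSpace ℝ (Fin d) :=
  (1 / (1 - 2 * k * ⟪x, y⟫_ℝ + k ^ 2 * ‖x‖ ^ 2 * ‖y‖ ^ 2)) •
    ((1 - 2 * k * ⟪x, y⟫_ℝ - k * ‖y‖ ^ 2) • x + (1 + k * ‖x‖ ^ 2) • y)

section InnerProductSpace

variable {E : Type*} [NormedAddCommGroup E] [InnerProductSpace ℝ E]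

theorem norm_smul_add_smul_sq (a b : ℝ) (x y : E) :
    ‖a • x + b • y‖ ^ 2 = a ^ 2 * ‖x‖ ^ 2 + 2 * (a * b) * ⟪x, y⟫_ℝ + b ^ 2 * ‖y‖ ^ 2 := by
  rw [norm_add_sq_real, norm_smul, norm_smul, real_inner_smul_left, real_inner_smul_right,
    Real.norm_eq_abs, Real.norm_eq_abs, mul_pow, mul_pow, sq_abs, sq_abs]
  ring

theorem sq_one_sub_abs_mul_norm_mul_norm_le (k : ℝ) (x y : E) :
    (1 - |k| * ‖x‖ * ‖y‖) ^ 2 ≤ 1 - 2 * k * ⟪x, y⟫_ℝ + k ^ 2 * ‖x‖ ^ 2 * ‖y‖ ^ 2 := by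
  have hkP : k * ⟪x, y⟫_ℝ ≤ |k| * (‖x‖ * ‖y‖) :=
    (le_abs_self _).trans <| by
      rw [abs_mul]
      exact mul_le_mul_of_nonneg_left (abs_real_inner_le_norm x y) (abs_nonneg k)
  rw [← sq_abs k]
  nlinarith

end InnerProductSpace

theorem lt_neg_one_div_iff_of_neg {k : ℝ} (hk : k < 0) (s : ℝ) :
    s < -(1 / k) ↔ 0 < 1 + k * s := by
  rw [← neg_div, lt_div_iff_of_neg hk]
  constructor <;> intro h <;> linarith

theorem abs_mul_mul_lt_one_of_nonpos {k a b : ℝ} (hk : k ≤ 0) (ha : 0 ≤ a) (hb : 0 ≤ b)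
    (hka : 0 < 1 + k * a ^ 2) (hkb : 0 < 1 + k * b ^ 2) : |k| * a * b < 1 := by
  have hsq : (|k| * a * b) ^ 2 = (-k * a ^ 2) * (-k * b ^ 2) := by
    rw [mul_pow, mul_pow, sq_abs]; ring
  have hsq_lt : (|k| * a * b) ^ 2 < 1 := by
    rw [hsq]
    exact mul_lt_one_of_nonneg_of_lt_one_left
      (mul_nonneg (neg_nonneg.mpr hk) (sq_nonneg a)) (by linarith) (by linarith)
  exact (pow_lt_one_iff_of_nonneg (by positivity) two_ne_zero).1 hsq_lt

theorem one_add_mul_norm_mobiusAdd_sq {d : ℕ} (k : ℝ) (x y : EuclideanSpace ℝ (Fin d))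
    (hD : 1 - 2 * k * ⟪x, y⟫_ℝ + k ^ 2 * ‖x‖ ^ 2 * ‖y‖ ^ 2 ≠ 0) :
    1 + k * ‖mobiusAdd k x y‖ ^ 2 =
      (1 + k * ‖x‖ ^ 2) * (1 + k * ‖y‖ ^ 2) /
        (1 - 2 * k * ⟪x, y⟫_ℝ + k ^ 2 * ‖x‖ ^ 2 * ‖y‖ ^ 2) := by
  rw [mobiusAdd, norm_smul, mul_pow, norm_smul_add_smul_sq, Real.norm_eq_abs, sq_abs,
    eq_div_iff hD]
  set D := 1 - 2 * k * ⟪x, y⟫_ℝ + k ^ 2 * ‖x‖ ^ 2 * ‖y‖ ^ 2 with hD_def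
  field_simp
  rw [hD_def]
  ring

theorem mobius_add_mem_ball (d : ℕ) (k : ℝ) (hk : k < 0)
    (x y : EuclideanSpace ℝ (Fin d))
    (hx : ‖x‖ ^ 2 < -(1 / k)) (hy : ‖y‖ ^ 2 < -(1 / k)) :
    ‖mobiusAdd k x y‖ ^ 2 < -(1 / k) := by
  rw [lt_neg_one_div_iff_of_neg hk] at hx hy ⊢
  have hxy : |k| * ‖x‖ * ‖y‖ < 1 :=
    abs_mul_mul_lt_one_of_nonpos hk.le (norm_nonneg x) (norm_nonneg y) hx hy
  have hD : 0 < 1 - 2 * k * ⟪x, y⟫_ℝ + k ^ 2 * ‖x‖ ^ 2 * ‖y‖ ^ 2 :=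
    (pow_pos (sub_pos.mpr hxy) 2).trans_le (sq_one_sub_abs_mul_norm_mul_norm_le k x y)
  rw [one_add_mul_norm_mobiusAdd_sq k x y hD.ne']
  positivity
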